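/- arXiv:0708.0981 — 3 statements merged into one kernel-verified Lean document; each statement's English description precedes it below -/
import Mathlib

section
/- Let A ≥ 0 be a real number, U(x) = 1 if x ≤ A and U(x) = 0 if x > A, and let X_1, …, X_n be independent Poisson random variables with means θ_1, …, θ_n > 0. Let S(X, θ) = ∑_{j=1}^n U(X_j)θ_j, V(X) = ∑_{j=1}^n X_j·1{X_j ≤ ⌊A⌋ + 1}, and define V*(X) = 0 if X_j ≥ ⌊A⌋ + 1 for all j, and V*(X) = V(X) otherwise. Let W : ℝ → [0, ∞) be measurable with W(0) = 0 and W(t) > 0 for t > 0. Then for every θ ∈ (0, ∞)^n, E_θ[W(V*(X) − S)] ≤ E_θ[W(V(X) − S)], and the inequality is strict whenever E_θ[W(V(X) − S)] < ∞; hence V(X) is an inadmissible estimator of S under the loss W(a − S). -/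
/-- Poisson probability mass function with mean `θ`. -/
noncomputable def poissonPmf (θ : ℝ) (x : ℕ) : ℝ :=
  Real.exp (-θ) * θ ^ x / (Nat.factorial x : ℝ)

/-- The estimand `S(x, θ) = ∑_j U(x_j)θ_j` with `U(x) = 1{x ≤ A}`. -/
noncomputable def poissonS (n : ℕ) (A : ℝ) (θ : Fin n → ℝ) (x : Fin n → ℕ) : ℝ :=
  ∑ j, (if ((x j : ℝ)) ≤ A then θ j else 0)

/-- Risk of the estimator `δ` of `S` under the loss `W(a - S)` when
`X_1, …, X_n` are independent Poisson with means `θ_1, …, θ_n`. -/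
noncomputable def poissonRiskN (n : ℕ) (A : ℝ) (θ : Fin n → ℝ) (W : ℝ → ℝ)
    (δ : (Fin n → ℕ) → ℝ) : ENNReal :=
  ∑' x : Fin n → ℕ,
    ENNReal.ofReal (W (δ x - poissonS n A θ x) * ∏ j, poissonPmf (θ j) (x j))

/-!
On the event that every `X_j ≥ ⌊A⌋ + 1` no indicator `U(X_j)` is on, so `S = 0` is known exactly
and `V* = 0` incurs loss `W 0 = 0`; elsewhere `V* = V`. Hence `V*` is never worse than `V`. At the
point `X_j = ⌊A⌋ + 1` for all `j`, which has positive Poisson probability, `V > 0 = S`, so `V`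
pays a positive loss there, which makes the (finite) risk of `V*` strictly smaller.
-/

open Finset

section ExactOnEvent

variable {α : Type*} {W : ℝ → ℝ} (p S : α → ℝ) {δ δ' : α → ℝ}

theorem ofReal_loss_mul_le (hW0 : W 0 = 0) {a a' s : ℝ} (h : a' = a ∨ a' = s) (q : ℝ) :
    ENNReal.ofReal (W (a' - s) * q) ≤ ENNReal.ofReal (W (a - s) * q) := by
  rcases h with rfl | rfl
  · exact le_rfl
  · simp [hW0]

theorem tsum_ofReal_loss_le (hW0 : W 0 = 0) (h : ∀ x, δ' x = δ x ∨ δ' x = S x) :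
    ∑' x, ENNReal.ofReal (W (δ' x - S x) * p x) ≤ ∑' x, ENNReal.ofReal (W (δ x - S x) * p x) :=
  ENNReal.tsum_le_tsum fun x => ofReal_loss_mul_le hW0 (h x) (p x)

theorem tsum_ofReal_loss_lt (hW0 : W 0 = 0) (h : ∀ x, δ' x = δ x ∨ δ' x = S x) {x₀ : α}
    (hexact : δ' x₀ = S x₀) (hpos : 0 < W (δ x₀ - S x₀) * p x₀)
    (hfin : ∑' x, ENNReal.ofReal (W (δ x - S x) * p x) ≠ ⊤) :
    ∑' x, ENNReal.ofReal (W (δ' x - S x) * p x) < ∑' x, ENNReal.ofReal (W (δ x - S x) * p x) :=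
  ENNReal.tsum_lt_tsum (i := x₀) (ne_top_of_le_ne_top hfin (tsum_ofReal_loss_le p S hW0 h))
    (fun x => ofReal_loss_mul_le hW0 (h x) (p x)) (by simpa [hexact, hW0] using hpos)

end ExactOnEvent

theorem poissonPmf_pos {θ : ℝ} (hθ : 0 < θ) (x : ℕ) : 0 < poissonPmf θ x := by
  unfold poissonPmf
  positivity

theorem poissonS_eq_zero {n : ℕ} {A : ℝ} (θ : Fin n → ℝ) {x : Fin n → ℕ}
    (hx : ∀ j, ⌊A⌋₊ + 1 ≤ x j) : poissonS n A θ x = 0 :=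
  sum_eq_zero fun j _ => if_neg (not_le.mpr (Nat.lt_of_floor_lt (hx j)))

theorem poisson_V_inadmissible_n_general (n : ℕ) (hn : 0 < n) (A : ℝ)
    (W : ℝ → ℝ)
    (hW0 : W 0 = 0) (hWpos : ∀ t : ℝ, 0 < t → 0 < W t)
    (V Vstar : (Fin n → ℕ) → ℝ)
    (hV : ∀ x, V x = ∑ j, (if x j ≤ Nat.floor A + 1 then ((x j : ℝ)) else 0))
    (hVstar : ∀ x, Vstar x = if ∀ j, Nat.floor A + 1 ≤ x j then 0 else V x)
    (θ : Fin n → ℝ) (hθ : ∀ j, 0 < θ j) :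
    poissonRiskN n A θ W Vstar ≤ poissonRiskN n A θ W V ∧
      (poissonRiskN n A θ W V < ⊤ →
        poissonRiskN n A θ W Vstar < poissonRiskN n A θ W V) := by
  have hsplit : ∀ x, Vstar x = V x ∨ Vstar x = poissonS n A θ x := by
    intro x
    by_cases hx : ∀ j, ⌊A⌋₊ + 1 ≤ x j
    · exact Or.inr (by rw [hVstar, if_pos hx, poissonS_eq_zero θ hx])
    · exact Or.inl (by rw [hVstar, if_neg hx])
  refine ⟨tsum_ofReal_loss_le _ _ hW0 hsplit, fun hfin => ?_⟩
  set x₀ : Fin n → ℕ := fun _ => ⌊A⌋₊ + 1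
  have hx₀ : ∀ j, ⌊A⌋₊ + 1 ≤ x₀ j := fun _ => le_rfl
  have hVx₀ : 0 < V x₀ := by
    have : Nonempty (Fin n) := Fin.pos_iff_nonempty.mp hn
    rw [hV]
    exact sum_pos (fun j _ => by rw [if_pos le_rfl]; positivity) univ_nonempty
  refine tsum_ofReal_loss_lt _ _ hW0 hsplit (x₀ := x₀) ?_ ?_ hfin.ne
  · rw [hVstar, if_pos hx₀, poissonS_eq_zero θ hx₀]
  · rw [poissonS_eq_zero θ hx₀, sub_zero]
    exact mul_pos (hWpos _ hVx₀) (prod_pos fun j _ => poissonPmf_pos (hθ j) _)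

/-- Theorem 2.1 (Poisson case): for `X_1, …, X_n` independent Poisson, the
unbiased estimator `V(X) = ∑_j X_j·1{X_j ≤ ⌊A⌋+1}` of `S = ∑_j U(X_j)θ_j`
is inadmissible under any loss `W(a - S)` with `W(0) = 0`, `W(t) > 0` for
`t > 0`: the estimator `V*` vanishing on `{∀ j, X_j ≥ ⌊A⌋+1}` and agreeing
with `V` elsewhere is at least as good for every `θ`, and strictly better
whenever the risk of `V` is finite. -/
theorem poisson_V_inadmissible_n (n : ℕ) (hn : 0 < n) (A : ℝ) (hA : 0 ≤ A)
    (W : ℝ → ℝ) (hWmeas : Measurable W) (hWnonneg : ∀ t, 0 ≤ W t)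
    (hW0 : W 0 = 0) (hWpos : ∀ t : ℝ, 0 < t → 0 < W t)
    (V Vstar : (Fin n → ℕ) → ℝ)
    (hV : ∀ x, V x = ∑ j, (if x j ≤ Nat.floor A + 1 then ((x j : ℝ)) else 0))
    (hVstar : ∀ x, Vstar x = if ∀ j, Nat.floor A + 1 ≤ x j then 0 else V x)
    (θ : Fin n → ℝ) (hθ : ∀ j, 0 < θ j) :
    poissonRiskN n A θ W Vstar ≤ poissonRiskN n A θ W V ∧
      (poissonRiskN n A θ W V < ⊤ →
        poissonRiskN n A θ W Vstar < poissonRiskN n A θ W V) :=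
  poisson_V_inadmissible_n_general n hn A W hW0 hWpos V Vstar hV hVstar θ hθ
end

section
/- Let A ≥ 0 be a real number, U(x) = 1 if x ≤ A and U(x) = 0 if x > A, and let X_1, …, X_n be independent geometric random variables with mass functions (1−θ_j)θ_j^x, 0 < θ_j < 1. Let S = ∑_{j=1}^n U(X_j)·θ_j/(1−θ_j), V(X) = ∑_{j=1}^n min(X_j, ⌊A⌋ + 1), and define V*(X) = 0 if X_j ≥ ⌊A⌋ + 1 for all j, and V*(X) = V(X) otherwise. Let W : ℝ → [0, ∞) be measurable with W(0) = 0 and W(t) > 0 for t > 0. Then for every θ ∈ (0,1)^n, E_θ[W(V*(X) − S)] ≤ E_θ[W(V(X) − S)], with strict inequality whenever the right-hand risk is finite; hence V(X) is an inadmissible estimator of S under the loss W(a − S). -/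
/-- Geometric probability mass function `f(x|θ) = (1-θ)θ^x`, `x = 0,1,2,…`. -/
noncomputable def geometricPmf (θ : ℝ) (x : ℕ) : ℝ := (1 - θ) * θ ^ x

/-- The estimand `S = ∑_j U(x_j)·θ_j/(1-θ_j)` with `U(x) = 1{x ≤ A}`. -/
noncomputable def geometricS (n : ℕ) (A : ℝ) (θ : Fin n → ℝ) (x : Fin n → ℕ) : ℝ :=
  ∑ j, (if ((x j : ℝ)) ≤ A then θ j / (1 - θ j) else 0)

/-- Risk of the estimator `δ` of `S` under the loss `W(a - S)` when
`X_1, …, X_n` are independent geometric with parameters `θ_1, …, θ_n`. -/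
noncomputable def geometricRiskN (n : ℕ) (A : ℝ) (θ : Fin n → ℝ) (W : ℝ → ℝ)
    (δ : (Fin n → ℕ) → ℝ) : ENNReal :=
  ∑' x : Fin n → ℕ,
    ENNReal.ofReal (W (δ x - geometricS n A θ x) * ∏ j, geometricPmf (θ j) (x j))

/-! On the event `{∀ j, X_j ≥ ⌊A⌋ + 1}` every indicator `U(X_j)` vanishes, so `S = 0` is known
exactly there, while `V = n(⌊A⌋ + 1) > 0`. Replacing `V` by the exact value `0` on that event
lowers the loss pointwise, and strictly at the point `X_j = ⌊A⌋ + 1`, which has positive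
probability. -/

open Finset

theorem geometricPmf_pos {θ : ℝ} (hθ0 : 0 < θ) (hθ1 : θ < 1) (x : ℕ) :
    0 < geometricPmf θ x :=
  mul_pos (sub_pos.2 hθ1) (pow_pos hθ0 x)

theorem geometricS_eq_zero_of_forall_floor_add_one_le {n : ℕ} {A : ℝ} {θ : Fin n → ℝ}
    {x : Fin n → ℕ} (hx : ∀ j, ⌊A⌋₊ + 1 ≤ x j) : geometricS n A θ x = 0 :=
  sum_eq_zero fun j _ => if_neg <| not_le.2 <|
    (Nat.lt_floor_add_one A).trans_le (by exact_mod_cast hx j)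

theorem ofReal_loss_mul_le_of_eq_or_exact {W : ℝ → ℝ} (hW0 : W 0 = 0) {a a' s p : ℝ}
    (h : a = a' ∨ a = s) : ENNReal.ofReal (W (a - s) * p) ≤ ENNReal.ofReal (W (a' - s) * p) := by
  rcases h with rfl | rfl
  · exact le_rfl
  · simp [hW0]

section Risk

variable {n : ℕ} {A : ℝ} {θ : Fin n → ℝ} {W : ℝ → ℝ} {δ δ' : (Fin n → ℕ) → ℝ}

theorem geometricRiskN_le_of_eq_or_exact (hW0 : W 0 = 0)
    (h : ∀ x, δ x = δ' x ∨ δ x = geometricS n A θ x) :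
    geometricRiskN n A θ W δ ≤ geometricRiskN n A θ W δ' :=
  ENNReal.tsum_le_tsum fun x => ofReal_loss_mul_le_of_eq_or_exact hW0 (h x)

theorem geometricRiskN_lt_of_eq_or_exact (hθ0 : ∀ j, 0 < θ j) (hθ1 : ∀ j, θ j < 1)
    (hW0 : W 0 = 0) (h : ∀ x, δ x = δ' x ∨ δ x = geometricS n A θ x)
    {x₀ : Fin n → ℕ} (hx₀ : δ x₀ = geometricS n A θ x₀)
    (hloss : 0 < W (δ' x₀ - geometricS n A θ x₀))
    (hfin : geometricRiskN n A θ W δ' < ⊤) :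
    geometricRiskN n A θ W δ < geometricRiskN n A θ W δ' := by
  have hle := geometricRiskN_le_of_eq_or_exact hW0 h
  have hpmf : 0 < ∏ j, geometricPmf (θ j) (x₀ j) :=
    prod_pos fun j _ => geometricPmf_pos (hθ0 j) (hθ1 j) _
  refine ENNReal.tsum_lt_tsum (i := x₀) (hle.trans_lt hfin).ne
    (fun x => ofReal_loss_mul_le_of_eq_or_exact hW0 (h x)) ?_
  simpa [hx₀, hW0] using mul_pos hloss hpmf

end Risk

theorem geometric_V_inadmissible_n_general (n : ℕ) (hn : 0 < n) (A : ℝ)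
    (W : ℝ → ℝ)
    (hW0 : W 0 = 0) (hWpos : ∀ t : ℝ, 0 < t → 0 < W t)
    (V Vstar : (Fin n → ℕ) → ℝ)
    (hV : ∀ x, V x = ∑ j, ((min (x j) (Nat.floor A + 1) : ℕ) : ℝ))
    (hVstar : ∀ x, Vstar x = if ∀ j, Nat.floor A + 1 ≤ x j then 0 else V x)
    (θ : Fin n → ℝ) (hθ0 : ∀ j, 0 < θ j) (hθ1 : ∀ j, θ j < 1) :
    geometricRiskN n A θ W Vstar ≤ geometricRiskN n A θ W V ∧
      (geometricRiskN n A θ W V < ⊤ →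
        geometricRiskN n A θ W Vstar < geometricRiskN n A θ W V) := by
  have hexact : ∀ x, Vstar x = V x ∨ Vstar x = geometricS n A θ x := fun x => by
    rw [hVstar x]
    split_ifs with hx
    · exact .inr (geometricS_eq_zero_of_forall_floor_add_one_le hx).symm
    · exact .inl rfl
  set x₀ : Fin n → ℕ := fun _ => ⌊A⌋₊ + 1
  have hS₀ : geometricS n A θ x₀ = 0 := geometricS_eq_zero_of_forall_floor_add_one_le fun _ => le_rfl
  have hV₀ : V x₀ = n * (⌊A⌋₊ + 1) := by simp [hV, x₀, mul_add]
  refine ⟨geometricRiskN_le_of_eq_or_exact hW0 hexact, fun hfin =>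
    geometricRiskN_lt_of_eq_or_exact hθ0 hθ1 hW0 hexact (x₀ := x₀) ?_ ?_ hfin⟩
  · simp [hVstar, hS₀, x₀]
  · exact hWpos _ (by rw [hS₀, hV₀, sub_zero]; positivity)

/-- Theorem 2.1 (geometric case): the unbiased estimator
`V(X) = ∑_j min(X_j, ⌊A⌋+1)` of `S = ∑_j U(X_j)·θ_j/(1-θ_j)` is inadmissible:
the estimator `V*` vanishing on `{∀ j, X_j ≥ ⌊A⌋+1}` and agreeing with `V`
elsewhere is at least as good for every `θ ∈ (0,1)^n`, and strictly better
whenever the risk of `V` is finite. -/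
theorem geometric_V_inadmissible_n (n : ℕ) (hn : 0 < n) (A : ℝ) (hA : 0 ≤ A)
    (W : ℝ → ℝ) (hWmeas : Measurable W) (hWnonneg : ∀ t, 0 ≤ W t)
    (hW0 : W 0 = 0) (hWpos : ∀ t : ℝ, 0 < t → 0 < W t)
    (V Vstar : (Fin n → ℕ) → ℝ)
    (hV : ∀ x, V x = ∑ j, ((min (x j) (Nat.floor A + 1) : ℕ) : ℝ))
    (hVstar : ∀ x, Vstar x = if ∀ j, Nat.floor A + 1 ≤ x j then 0 else V x)
    (θ : Fin n → ℝ) (hθ0 : ∀ j, 0 < θ j) (hθ1 : ∀ j, θ j < 1) :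
    geometricRiskN n A θ W Vstar ≤ geometricRiskN n A θ W V ∧
      (geometricRiskN n A θ W V < ⊤ →
        geometricRiskN n A θ W Vstar < geometricRiskN n A θ W V) :=
  geometric_V_inadmissible_n_general n hn A W hW0 hWpos V Vstar hV hVstar θ hθ0 hθ1
end

section
/- Let A ≥ 0 be a real number, set m = ⌊A⌋ + 1, and let X_1, …, X_n be i.i.d. Poisson random variables each with mean m. Let U(x) = 1 if x ≤ A and 0 if x > A, S = ∑_{j=1}^n U(X_j)·m, V(X) = ∑_{j=1}^n X_j·1{X_j ≤ m}, and V*(X) = 0 if X_j ≥ m for all j and V*(X) = V(X) otherwise. Then under squared error loss the improvement in risk equals E[(V(X) − S)²] − E[(V*(X) − S)²] = ∑_{i=1}^n (i·m)² · C(n, i) · (e^{-m} m^m / m!)^i · (1 − ∑_{y=0}^{m} e^{-m} m^y / y!)^{n−i}. -/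
open Finset

theorem hasSum_pi_prod_of_nonneg {α : Type*} {n : ℕ} (g : Fin n → α → ℝ) (a : Fin n → ℝ)
    (hg0 : ∀ j, 0 ≤ g j) (hg : ∀ j, HasSum (g j) (a j)) :
    HasSum (fun x : Fin n → α => ∏ j, g j (x j)) (∏ j, a j) := by
  induction n with
  | zero => simp
  | succ n ih =>
    have htail :=
      ih (fun j => g j.succ) (fun j => a j.succ) (fun j => hg0 j.succ) (fun j => hg j.succ)
    have htail0 : 0 ≤ fun c : Fin n → α => ∏ j, g j.succ (c j) :=
      fun c => prod_nonneg fun j _ => hg0 j.succ (c j)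
    have hsummable := (hg 0).summable.mul_of_nonneg htail.summable (hg0 0) htail0
    have hmul := (hg 0).mul htail hsummable
    rw [Fin.prod_univ_succ, ← (Fin.consEquiv fun _ => α).hasSum_iff]
    simpa [Function.comp_def, Fin.prod_univ_succ] using hmul

theorem HasSum.ite_lt {α : Type*} [AddCommGroup α] [TopologicalSpace α] [IsTopologicalAddGroup α]
    {f : ℕ → α} {a : α} (h : HasSum f a) (k : ℕ) :
    HasSum (fun y => if k < y then f y else 0) (a - ∑ y ∈ range (k + 1), f y) := by
  have hhead : HasSum (fun y => if y < k + 1 then f y else 0) (∑ y ∈ range (k + 1), f y) := by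
    convert hasSum_sum_of_ne_finset_zero (L := SummationFilter.unconditional ℕ)
      (f := fun y => if y < k + 1 then f y else 0) (s := range (k + 1))
      (fun b hb => if_neg (by simpa using hb)) using 1
    exact (sum_ite_of_true (fun y hy => mem_range.mp hy) _ _).symm
  refine (h.sub hhead).congr_fun fun y => ?_
  by_cases hy : k < y
  · rw [if_pos hy, if_neg (by omega), sub_zero]
  · rw [if_neg hy, if_pos (by omega), sub_self]

theorem prod_ite_mem_eq_pow_mul_pow {ι M : Type*} [Fintype ι] [DecidableEq ι] [CommMonoid M]
    (T : Finset ι) (p q : M) :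
    ∏ j, (if j ∈ T then p else q) = p ^ #T * q ^ (Fintype.card ι - #T) := by
  rw [prod_ite, prod_const, prod_const, filter_mem_eq_inter, univ_inter, filter_not,
    filter_mem_eq_inter, univ_inter, card_sdiff_of_subset T.subset_univ, card_univ]

theorem sum_powerset_mul_prod_ite_boole {ι α R : Type*} [Fintype ι] [DecidableEq ι]
    [CommSemiring R] {P Q : α → Prop} [DecidablePred P] [DecidablePred Q]
    (hPQ : ∀ a, P a → ¬ Q a) (c : Finset ι → R) (x : ι → α) :
    ∑ T ∈ univ.powerset,
        c T * ∏ j, (if j ∈ T then (if P (x j) then 1 else 0) else if Q (x j) then 1 else 0) =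
      if ∀ j, P (x j) ∨ Q (x j) then c {j | P (x j)} else 0 := by
  have hprod (T : Finset ι) :
      ∏ j, (if j ∈ T then (if P (x j) then 1 else 0) else if Q (x j) then 1 else 0 : R) =
        if T = ({j | P (x j)} : Finset ι) ∧ ∀ j, P (x j) ∨ Q (x j) then 1 else 0 := by
    have hfactor (j : ι) :
        (if j ∈ T then (if P (x j) then 1 else 0) else if Q (x j) then 1 else 0 : R) =
          if (j ∈ T ↔ P (x j)) ∧ (P (x j) ∨ Q (x j)) then 1 else 0 := by
      have := hPQ (x j)
      by_cases hj : j ∈ T <;> by_cases hP : P (x j) <;> by_cases hQ : Q (x j) <;> simp_all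
    simp_rw [hfactor, Fintype.prod_boole, forall_and]
    exact if_congr (by simp [Finset.ext_iff]) rfl rfl
  by_cases hPQx : ∀ j, P (x j) ∨ Q (x j)
  · simp only [hprod, hPQx, implies_true, and_true, if_true, mul_ite, mul_one, mul_zero]
    exact sum_ite_eq_of_mem' _ _ _ (by simp)
  · simp [hprod, hPQx]

theorem sum_ite_mem_Icc {ι : Type*} [Fintype ι] {p : ι → Prop} [DecidablePred p] {f : ι → ℝ}
    {C : ℝ} (hC : 0 ≤ C) (hf : ∀ i, p i → f i ∈ Set.Icc 0 C) :
    ∑ i, (if p i then f i else 0) ∈ Set.Icc 0 (Fintype.card ι * C) := by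
  have hterm (i : ι) : (if p i then f i else 0) ∈ Set.Icc 0 C := by
    split_ifs with hi
    exacts [hf i hi, ⟨le_rfl, hC⟩]
  refine ⟨sum_nonneg fun i _ => (hterm i).1, ?_⟩
  simpa using sum_le_card_nsmul univ _ C fun i _ => (hterm i).2

theorem summable_sq_sub_mul {α : Type*} {f g w : α → ℝ} {C : ℝ} (hf : ∀ x, f x ∈ Set.Icc 0 C)
    (hg : ∀ x, g x ∈ Set.Icc 0 C) (hw0 : ∀ x, 0 ≤ w x) (hw : Summable w) :
    Summable fun x => (f x - g x) ^ 2 * w x := by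
  refine (hw.mul_left (C ^ 2)).of_nonneg_of_le (fun x => mul_nonneg (sq_nonneg _) (hw0 x))
    fun x => mul_le_mul_of_nonneg_right ?_ (hw0 x)
  have hdiff := abs_le.mp <| abs_sub_le_of_nonneg_of_le (hf x).1 (hf x).2 (hg x).1 (hg x).2
  exact sq_le_sq' hdiff.1 hdiff.2

theorem hasSum_prod_mul_ite_eq_ite_lt {f : ℕ → ℝ} {s : ℝ} (hf0 : 0 ≤ f) (hf : HasSum f s)
    {n : ℕ} (m : ℕ) (T : Finset (Fin n)) :
    HasSum (fun x : Fin n → ℕ => ∏ j,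
        f (x j) * if j ∈ T then (if x j = m then 1 else 0) else if m < x j then 1 else 0)
      (f m ^ #T * (s - ∑ y ∈ range (m + 1), f y) ^ (n - #T)) := by
  set w : Fin n → ℕ → ℝ := fun j y =>
    f y * if j ∈ T then (if y = m then 1 else 0) else if m < y then 1 else 0
  have hw (j : Fin n) : HasSum (w j) (if j ∈ T then f m else s - ∑ y ∈ range (m + 1), f y) := by
    by_cases hj : j ∈ T
    · rw [if_pos hj]
      refine (hasSum_ite_eq m (f m)).congr_fun fun y => ?_
      by_cases hy : y = m <;> simp [w, hj, hy]
    · simpa [w, hj] using hf.ite_lt m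
  have hw0 (j : Fin n) : 0 ≤ w j := fun y => mul_nonneg (hf0 y) (by split_ifs <;> norm_num)
  have hprod := hasSum_pi_prod_of_nonneg w _ hw0 hw
  rwa [prod_ite_mem_eq_pow_mul_pow, Fintype.card_fin] at hprod

theorem hasSum_ite_forall_le_mul_prod {f : ℕ → ℝ} {s : ℝ} (hf0 : 0 ≤ f) (hf : HasSum f s)
    (n m : ℕ) (c : ℕ → ℝ) :
    HasSum (fun x : Fin n → ℕ => (if ∀ j, m ≤ x j then c #{j | x j = m} else 0) * ∏ j, f (x j))
      (∑ i ∈ range (n + 1),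
        n.choose i * c i * f m ^ i * (s - ∑ y ∈ range (m + 1), f y) ^ (n - i)) := by
  set q := s - ∑ y ∈ range (m + 1), f y
  have hpoint (x : Fin n → ℕ) :
      (if ∀ j, m ≤ x j then c #{j | x j = m} else 0) * ∏ j, f (x j) =
        ∑ T ∈ univ.powerset, c #T * ∏ j,
          f (x j) * if j ∈ T then (if x j = m then 1 else 0) else if m < x j then 1 else 0 := by
    have hle : (∀ j, m ≤ x j) ↔ ∀ j, x j = m ∨ m < x j := forall_congr' fun j => by omega
    have hdisj (y : ℕ) (hy : y = m) : ¬ m < y := by omega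
    calc (if ∀ j, m ≤ x j then c #{j | x j = m} else 0) * ∏ j, f (x j)
        = (∑ T ∈ univ.powerset, c #T * ∏ j,
            (if j ∈ T then (if x j = m then 1 else 0) else if m < x j then 1 else 0)) *
              ∏ j, f (x j) := by
          rw [sum_powerset_mul_prod_ite_boole hdisj (fun T => c #T) x]
          simp only [hle]
          congr!
      _ = _ := by
          simp only [prod_mul_distrib, sum_mul]
          exact sum_congr rfl fun T _ => by ring
  have hsum := hasSum_sum fun T (_ : T ∈ (univ : Finset (Fin n)).powerset) =>
    (hasSum_prod_mul_ite_eq_ite_lt hf0 hf m T).mul_left (c #T)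
  rw [sum_powerset_apply_card (fun i => c i * (f m ^ i * q ^ (n - i))), card_univ,
    Fintype.card_fin] at hsum
  have hval : ∑ i ∈ range (n + 1), n.choose i • (c i * (f m ^ i * q ^ (n - i))) =
      ∑ i ∈ range (n + 1), n.choose i * c i * f m ^ i * q ^ (n - i) :=
    sum_congr rfl fun i _ => by rw [nsmul_eq_mul]; ring
  rw [hval] at hsum
  exact hsum.congr_fun hpoint

theorem poissonPmf_nonneg {θ : ℝ} (hθ : 0 ≤ θ) (y : ℕ) : 0 ≤ poissonPmf θ y := by
  unfold poissonPmf
  positivity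

theorem hasSum_poissonPmf (θ : ℝ) : HasSum (poissonPmf θ) 1 := by
  have hexp : HasSum (fun y : ℕ => θ ^ y / y.factorial) (Real.exp θ) := by
    rw [Real.exp_eq_exp_ℝ]
    exact NormedSpace.expSeries_div_hasSum_exp θ
  have hscaled := hexp.mul_left (Real.exp (-θ))
  rw [← Real.exp_add, neg_add_cancel, Real.exp_zero] at hscaled
  refine hscaled.congr_fun fun y => ?_
  unfold poissonPmf
  ring

theorem sum_ite_le_eq_card_mul {ι : Type*} [Fintype ι] {m : ℕ} {x : ι → ℕ} (hx : ∀ j, m ≤ x j) :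
    ∑ j, (if x j ≤ m then (x j : ℝ) else 0) = #{j | x j = m} * m := by
  have hterm (j : ι) : (if x j ≤ m then (x j : ℝ) else 0) = if x j = m then (m : ℝ) else 0 := by
    have := hx j
    by_cases hj : x j = m
    · simp [hj]
    · rw [if_neg (by omega), if_neg hj]
  rw [sum_congr rfl fun j _ => hterm j, sum_ite, sum_const_zero, add_zero, sum_const, nsmul_eq_mul]

theorem sq_sub_sub_sq_sub_eq_ite_forall_le {n m : ℕ} {A : ℝ} (hA : ∀ y : ℕ, m ≤ y → A < y)
    {S V Vstar : (Fin n → ℕ) → ℝ}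
    (hS : ∀ x, S x = ∑ j, (if ((x j : ℝ)) ≤ A then (m : ℝ) else 0))
    (hV : ∀ x, V x = ∑ j, (if x j ≤ m then ((x j : ℝ)) else 0))
    (hVstar : ∀ x, Vstar x = if ∀ j, m ≤ x j then 0 else V x) (x : Fin n → ℕ) :
    (V x - S x) ^ 2 - (Vstar x - S x) ^ 2 =
      if ∀ j, m ≤ x j then (((#{j | x j = m} * m : ℕ) : ℝ)) ^ 2 else 0 := by
  rw [hVstar x]
  split_ifs with hx
  · have hS0 : S x = 0 := by
      rw [hS x]
      exact sum_eq_zero fun j _ => if_neg (hA _ (hx j)).not_ge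
    rw [hS0, hV x, sum_ite_le_eq_card_mul hx]
    push_cast
    ring
  · ring

theorem poisson_risk_improvement_general (A : ℝ) (n : ℕ)
    (m : ℕ) (hm : m = Nat.floor A + 1)
    (S V Vstar : (Fin n → ℕ) → ℝ)
    (hS : ∀ x, S x = ∑ j, (if ((x j : ℝ)) ≤ A then (m : ℝ) else 0))
    (hV : ∀ x, V x = ∑ j, (if x j ≤ m then ((x j : ℝ)) else 0))
    (hVstar : ∀ x, Vstar x = if ∀ j, m ≤ x j then 0 else V x) :
    (∑' x : Fin n → ℕ, (V x - S x) ^ 2 * ∏ j, poissonPmf (m : ℝ) (x j)) -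
        (∑' x : Fin n → ℕ, (Vstar x - S x) ^ 2 * ∏ j, poissonPmf (m : ℝ) (x j)) =
      ∑ i ∈ Finset.Icc 1 n,
        ((i * m : ℕ) : ℝ) ^ 2 * (n.choose i : ℝ) *
          (Real.exp (-(m : ℝ)) * (m : ℝ) ^ m / (Nat.factorial m : ℝ)) ^ i *
          (1 - ∑ y ∈ Finset.range (m + 1),
            Real.exp (-(m : ℝ)) * (m : ℝ) ^ y / (Nat.factorial y : ℝ)) ^ (n - i) := by
  have hA (y : ℕ) (hy : m ≤ y) : A < y :=
    (Nat.lt_floor_add_one A).trans_le (by rw [hm] at hy; exact_mod_cast hy)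
  have hpmf0 : 0 ≤ poissonPmf m := poissonPmf_nonneg m.cast_nonneg
  have hP := hasSum_pi_prod_of_nonneg (fun (_ : Fin n) => poissonPmf m) _ (fun _ => hpmf0)
    fun _ => hasSum_poissonPmf m
  have hP0 (x : Fin n → ℕ) : 0 ≤ ∏ j, poissonPmf m (x j) := prod_nonneg fun j _ => hpmf0 _
  have hSIcc (x : Fin n → ℕ) : S x ∈ Set.Icc 0 ((n : ℝ) * m) := by
    simpa [hS x] using sum_ite_mem_Icc m.cast_nonneg fun j (_ : (x j : ℝ) ≤ A) =>
      ⟨m.cast_nonneg, le_rfl⟩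
  have hVIcc (x : Fin n → ℕ) : V x ∈ Set.Icc 0 ((n : ℝ) * m) := by
    simpa [hV x] using sum_ite_mem_Icc m.cast_nonneg fun j (hj : x j ≤ m) =>
      ⟨(x j).cast_nonneg, Nat.cast_le.mpr hj⟩
  have hVstarIcc (x : Fin n → ℕ) : Vstar x ∈ Set.Icc 0 ((n : ℝ) * m) := by
    rw [hVstar x]
    split_ifs
    exacts [⟨le_rfl, by positivity⟩, hVIcc x]
  rw [← (summable_sq_sub_mul hVIcc hSIcc hP0 hP.summable).tsum_sub
      (summable_sq_sub_mul hVstarIcc hSIcc hP0 hP.summable),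
    tsum_congr fun x => by rw [← sub_mul, sq_sub_sub_sq_sub_eq_ite_forall_le hA hS hV hVstar x],
    (hasSum_ite_forall_le_mul_prod hpmf0 (hasSum_poissonPmf m) n m
      fun i => ((i * m : ℕ) : ℝ) ^ 2).tsum_eq,
    range_eq_Ico, sum_eq_sum_Ico_succ_bot n.succ_pos]
  simp only [zero_mul, Nat.cast_zero, ne_eq, OfNat.ofNat_ne_zero, not_false_eq_true, zero_pow,
    mul_zero, zero_add]
  refine sum_congr rfl fun i _ => ?_
  unfold poissonPmf
  ring

/-- Remark 2.2: let `m = ⌊A⌋ + 1` and let `X_1, …, X_n` be i.i.d. Poisson with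
mean `m`.  With `S = ∑_j U(X_j)·m` (where `U(x) = 1{x ≤ A}`),
`V(X) = ∑_j X_j·1{X_j ≤ m}`, and `V*` the improved estimator vanishing on
`{∀ j, X_j ≥ m}` and agreeing with `V` elsewhere, the improvement in risk
under squared error loss equals
`∑_{i=1}^n (i·m)² C(n,i) (e^{-m} m^m/m!)^i (1 - ∑_{y=0}^m e^{-m} m^y/y!)^{n-i}`. -/
theorem poisson_risk_improvement (A : ℝ) (hA : 0 ≤ A) (n : ℕ)
    (m : ℕ) (hm : m = Nat.floor A + 1)
    (S V Vstar : (Fin n → ℕ) → ℝ)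
    (hS : ∀ x, S x = ∑ j, (if ((x j : ℝ)) ≤ A then (m : ℝ) else 0))
    (hV : ∀ x, V x = ∑ j, (if x j ≤ m then ((x j : ℝ)) else 0))
    (hVstar : ∀ x, Vstar x = if ∀ j, m ≤ x j then 0 else V x) :
    (∑' x : Fin n → ℕ, (V x - S x) ^ 2 * ∏ j, poissonPmf (m : ℝ) (x j)) -
        (∑' x : Fin n → ℕ, (Vstar x - S x) ^ 2 * ∏ j, poissonPmf (m : ℝ) (x j)) =
      ∑ i ∈ Finset.Icc 1 n,
        ((i * m : ℕ) : ℝ) ^ 2 * (n.choose i : ℝ) *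
          (Real.exp (-(m : ℝ)) * (m : ℝ) ^ m / (Nat.factorial m : ℝ)) ^ i *
          (1 - ∑ y ∈ Finset.range (m + 1),
            Real.exp (-(m : ℝ)) * (m : ℝ) ^ y / (Nat.factorial y : ℝ)) ^ (n - i) :=
  poisson_risk_improvement_general A n m hm S V Vstar hS hV hVstar
end
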